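/- arXiv:2305.14219 — 5 statements merged into one kernel-verified Lean document; each statement's English description precedes it below -/
import Mathlib

section
/- For every real ν > 0, the Stokeslet scalar potential S(x,t) = erf(‖x‖/√(4νt))/‖x‖ satisfies the heat equation ∂S/∂t(x,t) = ν·Δ_x S(x,t) at every point x ∈ ℝ³ with x ≠ 0 and every t > 0, where Δ_x denotes the spatial Laplacian. -/
open Real MeasureTheory

noncomputable section

/-- `ℝ³` as a Euclidean space. -/
abbrev E3 := EuclideanSpace ℝ (Fin 3)

/-- The `i`-th standard basis vector of `ℝ³`. -/
def e3 (i : Fin 3) : E3 := EuclideanSpace.single i 1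

/-- Partial derivative of `f : ℝ³ → ℝ` in the `i`-th coordinate direction. -/
def pd (i : Fin 3) (f : E3 → ℝ) (x : E3) : ℝ := fderiv ℝ f x (e3 i)

/-- The three-dimensional heat kernel `Φ(x,t) = (4πνt)^(−3/2) exp(−‖x‖²/(4νt))`. -/
def heatKernel (ν : ℝ) (x : E3) (t : ℝ) : ℝ :=
  (4 * π * ν * t) ^ (-(3 : ℝ) / 2) * Real.exp (-‖x‖ ^ 2 / (4 * ν * t))

/-- The error function `erf y = (2/√π) ∫₀^y exp(−s²) ds`. -/
def erf (y : ℝ) : ℝ := (2 / Real.sqrt π) * ∫ s in (0 : ℝ)..y, Real.exp (-s ^ 2)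

/-- The Stokeslet scalar potential `S(x,t) = erf(‖x‖/√(4νt))/‖x‖`. -/
def stokesPot (ν : ℝ) (x : E3) (t : ℝ) : ℝ := erf (‖x‖ / Real.sqrt (4 * ν * t)) / ‖x‖

/-- The time-dependent Stokeslet velocity
`u^S_{ki}(x,t) = (1/(4πν)) ∂S/∂t δ_{ki} − (1/(4π)) ∂²S/∂x_k∂x_i`. -/
def stokeslet (ν : ℝ) (k i : Fin 3) (x : E3) (t : ℝ) : ℝ :=
  (1 / (4 * π * ν)) * deriv (fun s => stokesPot ν x s) t * (if k = i then 1 else 0)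
    - (1 / (4 * π)) * pd k (fun y => pd i (fun z => stokesPot ν z t) y) x

/-! ### Auxiliary lemmas -/

/-- Derivative of the error function. -/
lemma erf_hasDerivAt (y : ℝ) :
    HasDerivAt erf ((2 / Real.sqrt π) * Real.exp (-y ^ 2)) y := by
  have hc : Continuous fun s : ℝ => Real.exp (-s ^ 2) :=
    Real.continuous_exp.comp (continuous_pow 2).neg
  have h := intervalIntegral.integral_hasDerivAt_right
    (hc.intervalIntegrable 0 y) (hc.stronglyMeasurableAtFilter volume (nhds y))
    hc.continuousAt
  exact h.const_mul (2 / Real.sqrt π)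

/-- Derivative of the norm on `ℝ³` away from the origin. -/
lemma hasFDerivAt_norm3 {y : E3} (hy : y ≠ 0) :
    HasFDerivAt (fun z : E3 => ‖z‖) (‖y‖⁻¹ • innerSL ℝ y) y := by
  have hy' : ‖y‖ ≠ 0 := norm_ne_zero_iff.mpr hy
  have h2 : (‖y‖ : ℝ) ^ 2 ≠ 0 := pow_ne_zero _ hy'
  have h := ((hasStrictFDerivAt_norm_sq y).hasFDerivAt).sqrt h2
  have hfun : (fun z : E3 => Real.sqrt (‖z‖ ^ 2)) = fun z : E3 => ‖z‖ := by
    funext z; exact Real.sqrt_sq (norm_nonneg z)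
  rw [hfun] at h
  refine h.congr_fderiv (Eq.symm ?_)
  rw [Real.sqrt_sq (norm_nonneg y)]
  ext v
  simp only [ContinuousLinearMap.coe_smul', Pi.smul_apply, smul_eq_mul,
    ContinuousLinearMap.smul_apply]
  field_simp
  ring

/-- The auxiliary radial function `Φ(u) = G'(u)/u` where `G(u) = erf(u/c)/u`. -/
def Phi (c u : ℝ) : ℝ :=
  (2 / Real.sqrt π) * Real.exp (-(u / c) ^ 2) / (c * u ^ 2) - erf (u / c) / u ^ 3

/-- The derivative of `Phi c`. -/
def Psi (c u : ℝ) : ℝ :=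
  -2 * (2 / Real.sqrt π) * Real.exp (-(u / c) ^ 2) / (c ^ 3 * u)
    - 3 * (2 / Real.sqrt π) * Real.exp (-(u / c) ^ 2) / (c * u ^ 3)
    + 3 * erf (u / c) / u ^ 4

lemma erf_comp_hasDerivAt (c : ℝ) (u : ℝ) :
    HasDerivAt (fun v : ℝ => erf (v / c))
      ((2 / Real.sqrt π) * Real.exp (-(u / c) ^ 2) * (1 / c)) u := by
  have h := (erf_hasDerivAt (u / c)).comp u ((hasDerivAt_id u).div_const c)
  exact h

lemma G_hasDerivAt (c : ℝ) (hc : c ≠ 0) {u : ℝ} (hu : u ≠ 0) :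
    HasDerivAt (fun v : ℝ => erf (v / c) / v) (u * Phi c u) u := by
  have hπ : Real.sqrt π ≠ 0 := by positivity
  have h := (erf_comp_hasDerivAt c u).div (hasDerivAt_id u) hu
  refine h.congr_deriv (Eq.symm ?_)
  simp only [Phi, id_eq]
  field_simp

lemma Phi_hasDerivAt (c : ℝ) (hc : c ≠ 0) {u : ℝ} (hu : u ≠ 0) :
    HasDerivAt (fun v : ℝ => Phi c v) (Psi c u) u := by
  have hπ : Real.sqrt π ≠ 0 := by positivity
  have hin : HasDerivAt (fun v : ℝ => -(v / c) ^ 2) (-(2 * (u / c) * (1 / c))) u := by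
    have h := (((hasDerivAt_id u).div_const c).pow 2).neg
    refine h.congr_deriv (Eq.symm ?_)
    simp
  have hexp := hin.exp
  have hden1 : HasDerivAt (fun v : ℝ => c * v ^ 2) (c * (2 * u)) u := by
    have h := (hasDerivAt_pow 2 u).const_mul c
    refine h.congr_deriv (Eq.symm ?_)
    simp
  have h1 := (hexp.const_mul (2 / Real.sqrt π)).div hden1
    (mul_ne_zero hc (pow_ne_zero _ hu))
  have h2 := (erf_comp_hasDerivAt c u).div (hasDerivAt_pow 3 u) (pow_ne_zero 3 hu)
  have h := h1.sub h2
  refine h.congr_deriv (Eq.symm ?_)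
  simp only [Phi, Psi]
  field_simp
  ring

lemma S_hasFDerivAt (c : ℝ) (hc : c ≠ 0) {y : E3} (hy : y ≠ 0) :
    HasFDerivAt (fun z : E3 => erf (‖z‖ / c) / ‖z‖) (Phi c ‖y‖ • innerSL ℝ y) y := by
  have hr : ‖y‖ ≠ 0 := norm_ne_zero_iff.mpr hy
  have h := (G_hasDerivAt c hc hr).comp_hasFDerivAt y (hasFDerivAt_norm3 hy)
  refine h.congr_fderiv (Eq.symm ?_)
  rw [smul_smul]
  congr 1
  field_simp

lemma pd_S (c : ℝ) (hc : c ≠ 0) {y : E3} (hy : y ≠ 0) (i : Fin 3) :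
    pd i (fun z : E3 => erf (‖z‖ / c) / ‖z‖) y = Phi c ‖y‖ * y i := by
  rw [pd, (S_hasFDerivAt c hc hy).fderiv]
  simp [e3, EuclideanSpace.inner_single_right, real_inner_comm]

lemma pd_pd_S (c : ℝ) (hc : c ≠ 0) {x : E3} (hx : x ≠ 0) (i : Fin 3) :
    pd i (fun y => pd i (fun z : E3 => erf (‖z‖ / c) / ‖z‖) y) x
      = Psi c ‖x‖ * ‖x‖⁻¹ * (x i) ^ 2 + Phi c ‖x‖ := by
  have hr : ‖x‖ ≠ 0 := norm_ne_zero_iff.mpr hx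
  have hev : (fun y : E3 => pd i (fun z : E3 => erf (‖z‖ / c) / ‖z‖) y)
      =ᶠ[nhds x] fun y : E3 => Phi c ‖y‖ * y i := by
    filter_upwards [IsOpen.mem_nhds isOpen_compl_singleton hx] with y hy
    exact pd_S c hc hy i
  rw [pd, hev.fderiv_eq]
  have h1 : HasFDerivAt (fun y : E3 => Phi c ‖y‖)
      (Psi c ‖x‖ • (‖x‖⁻¹ • innerSL ℝ x)) x :=
    (Phi_hasDerivAt c hc hr).comp_hasFDerivAt x (hasFDerivAt_norm3 hx)
  have h2 : HasFDerivAt (fun y : E3 => y i) (EuclideanSpace.proj i : E3 →L[ℝ] ℝ) x :=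
    (EuclideanSpace.proj i : E3 →L[ℝ] ℝ).hasFDerivAt
  have h3 : HasFDerivAt (fun y : E3 => Phi c ‖y‖ * y i) _ x := h1.mul h2
  rw [h3.fderiv]
  simp [e3, EuclideanSpace.inner_single_right, real_inner_comm,
    EuclideanSpace.single_apply]
  ring

/-- The Stokeslet scalar potential satisfies the heat equation `∂S/∂t = ν Δ_x S`
for `x ≠ 0`, `t > 0`. -/
theorem stokesPot_satisfies_heat_equation (ν : ℝ) (hν : 0 < ν) (x : E3) (hx : x ≠ 0)
    (t : ℝ) (ht : 0 < t) :
    deriv (fun s => stokesPot ν x s) t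
      = ν * ∑ i : Fin 3, pd i (fun y => pd i (fun z => stokesPot ν z t) y) x := by
  have hr : (0 : ℝ) < ‖x‖ := norm_pos_iff.mpr hx
  have hr' : ‖x‖ ≠ 0 := ne_of_gt hr
  have hC0 : (0 : ℝ) < Real.sqrt (4 * ν * t) := Real.sqrt_pos.mpr (by positivity)
  have hC : Real.sqrt (4 * ν * t) ≠ 0 := ne_of_gt hC0
  have hπ : Real.sqrt π ≠ 0 := by positivity
  -- time derivative
  have hsq : HasDerivAt (fun s : ℝ => Real.sqrt (4 * ν * s))
      ((4 * ν) / (2 * Real.sqrt (4 * ν * t))) t := by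
    have h1 : HasDerivAt (fun s : ℝ => 4 * ν * s) (4 * ν) t := by
      simpa using (hasDerivAt_id t).const_mul (4 * ν)
    exact h1.sqrt (by positivity)
  have hquot := (hasDerivAt_const t ‖x‖).div hsq hC
  have htime : HasDerivAt (fun s : ℝ => stokesPot ν x s)
      (-(2 * ν) * ((2 / Real.sqrt π) *
          Real.exp (-(‖x‖ / Real.sqrt (4 * ν * t)) ^ 2)) / Real.sqrt (4 * ν * t) ^ 3) t := by
    have h := ((erf_hasDerivAt (‖x‖ / Real.sqrt (4 * ν * t))).comp t hquot).div_const ‖x‖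
    refine h.congr_deriv (Eq.symm ?_)
    rw [div_eq_div_iff (by positivity) (by positivity)]
    field_simp
    ring
  rw [htime.deriv]
  -- spatial side
  have hpd : ∀ i : Fin 3, pd i (fun y => pd i (fun z => stokesPot ν z t) y) x
      = Psi (Real.sqrt (4 * ν * t)) ‖x‖ * ‖x‖⁻¹ * (x i) ^ 2
        + Phi (Real.sqrt (4 * ν * t)) ‖x‖ := by
    intro i
    have h := pd_pd_S (Real.sqrt (4 * ν * t)) hC hx i
    simpa [stokesPot] using h
  have hxsq : ∑ i : Fin 3, (x i) ^ 2 = ‖x‖ ^ 2 := by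
    rw [EuclideanSpace.norm_eq]
    rw [Real.sq_sqrt (by positivity)]
    simp [sq_abs]
  simp only [hpd, Finset.sum_add_distrib, Finset.sum_const, Finset.card_univ,
    Fintype.card_fin, nsmul_eq_mul, ← Finset.mul_sum, hxsq]
  simp only [Phi, Psi]
  field_simp
  ring

end
end

section
/- For every real ν > 0, every x ∈ ℝ³ with x ≠ 0 and every t > 0, the spatial Laplacian of the Stokeslet scalar potential is a multiple of the heat kernel: Δ_x S(x,t) = −4π·(4πνt)^(−3/2)·exp(−‖x‖²/(4νt)). (This is the identity u^B_{,jj} = ∓u^A relating the two components of the unsteady Stokeslet in Appendix A.) -/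
open Real MeasureTheory

noncomputable section

/-- first radial derivative (in the variable `u = r²`) -/
def g1 (c u : ℝ) : ℝ :=
  (2 / Real.sqrt π) / (2 * c) * Real.exp (-u / c ^ 2) / u
    - erf (Real.sqrt u / c) / (2 * u * Real.sqrt u)

/-- second radial derivative -/
def g2 (c u : ℝ) : ℝ :=
  (2 / Real.sqrt π) / (2 * c) *
      (-(1 / c ^ 2) * Real.exp (-u / c ^ 2) / u - Real.exp (-u / c ^ 2) / u ^ 2)
    - ((2 / Real.sqrt π) / (4 * c) * Real.exp (-u / c ^ 2) / u ^ 2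
        - (3 / 4) * erf (Real.sqrt u / c) / (u ^ 2 * Real.sqrt u))

lemma hasDerivAt_g (c : ℝ) (hc : 0 < c) {u : ℝ} (hu : 0 < u) :
    HasDerivAt (fun w => erf (Real.sqrt w / c) / Real.sqrt w) (g1 c u) u := by
  have hsu : 0 < Real.sqrt u := Real.sqrt_pos.2 hu
  have hs : HasDerivAt Real.sqrt (1 / (2 * Real.sqrt u)) u := Real.hasDerivAt_sqrt hu.ne'
  have herf : HasDerivAt (fun w => erf (Real.sqrt w / c))
      ((2 / Real.sqrt π) * Real.exp (-(Real.sqrt u / c) ^ 2) * (1 / (2 * Real.sqrt u) / c)) u := by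
    have := (erf_hasDerivAt (Real.sqrt u / c)).comp u (hs.div_const c); exact this
  have h : HasDerivAt (fun w => erf (Real.sqrt w / c) / Real.sqrt w) _ u := herf.div hs hsu.ne'
  convert h using 1
  have hsq : Real.sqrt u ^ 2 = u := Real.sq_sqrt hu.le
  have harg : -(Real.sqrt u / c) ^ 2 = -u / c ^ 2 := by
    rw [div_pow, hsq]; ring
  rw [harg, g1]
  generalize hE : Real.exp (-u / c ^ 2) = E
  generalize hF : erf (Real.sqrt u / c) = F
  generalize hs' : Real.sqrt u = s at hsq ⊢
  subst hsq
  have hsne : s ≠ 0 := by intro h; rw [h] at hu; simp at hu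
  field_simp

lemma hasDerivAt_g1 (c : ℝ) (hc : 0 < c) {u : ℝ} (hu : 0 < u) :
    HasDerivAt (g1 c) (g2 c u) u := by
  have hsu : 0 < Real.sqrt u := Real.sqrt_pos.2 hu
  have hs : HasDerivAt Real.sqrt (1 / (2 * Real.sqrt u)) u := Real.hasDerivAt_sqrt hu.ne'
  have hexp : HasDerivAt (fun w : ℝ => Real.exp (-w / c ^ 2))
      (Real.exp (-u / c ^ 2) * (-1 / c ^ 2)) u := by
    have : HasDerivAt (fun w : ℝ => -w / c ^ 2) (-1 / c ^ 2) u := by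
      simpa using ((hasDerivAt_id u).neg.div_const (c ^ 2))
    exact this.exp
  have t1 : HasDerivAt (fun w => (2 / Real.sqrt π) / (2 * c) * Real.exp (-w / c ^ 2) / w)
      (((2 / Real.sqrt π) / (2 * c) * (Real.exp (-u / c ^ 2) * (-1 / c ^ 2)) * u
        - (2 / Real.sqrt π) / (2 * c) * Real.exp (-u / c ^ 2) * 1) / u ^ 2) u :=
    (hexp.const_mul _).div (hasDerivAt_id u) hu.ne'
  have herf : HasDerivAt (fun w => erf (Real.sqrt w / c))
      ((2 / Real.sqrt π) * Real.exp (-(Real.sqrt u / c) ^ 2) * (1 / (2 * Real.sqrt u) / c)) u := by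
    have := (erf_hasDerivAt (Real.sqrt u / c)).comp u (hs.div_const c); exact this
  have hden : HasDerivAt (fun w => 2 * w * Real.sqrt w)
      (2 * 1 * Real.sqrt u + 2 * u * (1 / (2 * Real.sqrt u))) u := by
    simpa [mul_assoc] using (show HasDerivAt (fun w : ℝ => 2 * w * Real.sqrt w) _ u from
      ((hasDerivAt_id u).const_mul (2:ℝ)).mul hs)
  have hdenne : 2 * u * Real.sqrt u ≠ 0 := by positivity
  have t2 : HasDerivAt (fun w => erf (Real.sqrt w / c) / (2 * w * Real.sqrt w)) _ u :=
    herf.div hden hdenne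
  have h : HasDerivAt (fun w => (2 / Real.sqrt π) / (2 * c) * Real.exp (-w / c ^ 2) / w
      - erf (Real.sqrt w / c) / (2 * w * Real.sqrt w)) _ u := t1.sub t2
  convert h using 1
  · rfl
  have hsq : Real.sqrt u ^ 2 = u := Real.sq_sqrt hu.le
  have harg : -(Real.sqrt u / c) ^ 2 = -u / c ^ 2 := by rw [div_pow, hsq]; ring
  rw [harg, g2]
  generalize hE : Real.exp (-u / c ^ 2) = E
  generalize hF : erf (Real.sqrt u / c) = F
  generalize hs' : Real.sqrt u = s at hsq ⊢
  subst hsq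
  have hsne : s ≠ 0 := by intro h; rw [h] at hu; simp at hu
  have hcne : c ≠ 0 := hc.ne'
  field_simp
  ring

lemma key_identity (c : ℝ) (hc : 0 < c) {u : ℝ} (hu : 0 < u) :
    4 * u * g2 c u + 6 * g1 c u
      = -(4 / (Real.sqrt π * c ^ 3)) * Real.exp (-u / c ^ 2) := by
  rw [g1, g2]
  generalize hE : Real.exp (-u / c ^ 2) = E
  generalize hF : erf (Real.sqrt u / c) = F
  generalize hs' : Real.sqrt u = s
  have hsq : s ^ 2 = u := by rw [← hs']; exact Real.sq_sqrt hu.le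
  subst hsq
  have hsne : s ≠ 0 := by intro h; rw [h] at hu; simp at hu
  have hcne : c ≠ 0 := hc.ne'
  have hπ : Real.sqrt π ≠ 0 := by positivity
  field_simp
  ring

lemma normsq_hasFDerivAt (y : E3) :
    HasFDerivAt (fun z : E3 => ‖z‖ ^ 2) (2 • (innerSL ℝ y)) y :=
  (hasStrictFDerivAt_norm_sq y).hasFDerivAt

lemma inner_e3 (y : E3) (i : Fin 3) : (innerSL ℝ y) (e3 i) = y i := by
  simp [e3, EuclideanSpace.single_apply, PiLp.inner_apply]

/-- The spatial Laplacian of the Stokeslet scalar potential is a multiple of the heat kernel: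
`Δ_x S(x,t) = −4π Φ(x,t)` for `x ≠ 0`, `t > 0`. -/
theorem stokesPot_laplacian_eq (ν : ℝ) (hν : 0 < ν) (x : E3) (hx : x ≠ 0)
    (t : ℝ) (ht : 0 < t) :
    ∑ i : Fin 3, pd i (fun y => pd i (fun z => stokesPot ν z t) y) x
      = -(4 * π) * heatKernel ν x t := by
  set c : ℝ := Real.sqrt (4 * ν * t) with hc_def
  have h4νt : (0:ℝ) < 4 * ν * t := by positivity
  have hc : 0 < c := Real.sqrt_pos.2 h4νt
  have hc2 : c ^ 2 = 4 * ν * t := Real.sq_sqrt h4νt.le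
  -- the potential as a function of `‖z‖²`
  have hpot : ∀ z : E3, stokesPot ν z t
      = (fun w => erf (Real.sqrt w / c) / Real.sqrt w) (‖z‖ ^ 2) := by
    intro z
    simp only [stokesPot, Real.sqrt_sq (norm_nonneg z)]
    rfl
  -- first derivative formula, valid near any nonzero point
  have hfd : ∀ y : E3, y ≠ 0 →
      HasFDerivAt (fun z => stokesPot ν z t)
        (g1 c (‖y‖ ^ 2) • (2 • (innerSL ℝ y))) y := by
    intro y hy
    have hupos : (0:ℝ) < ‖y‖ ^ 2 := by
      have := norm_pos_iff.2 hy
      positivity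
    have := (hasDerivAt_g c hc hupos).comp_hasFDerivAt y (normsq_hasFDerivAt y)
    exact this.congr_of_eventuallyEq (Filter.Eventually.of_forall hpot)
  have hpd1 : ∀ i : Fin 3, ∀ y : E3, y ≠ 0 →
      pd i (fun z => stokesPot ν z t) y = g1 c (‖y‖ ^ 2) * (2 * y i) := by
    intro i y hy
    rw [pd, (hfd y hy).fderiv]
    simp only [ContinuousLinearMap.smul_apply, smul_eq_mul, nsmul_eq_mul, inner_e3]
    push_cast
    ring
  -- second derivative
  have hxne : ∀ᶠ y : E3 in nhds x, y ≠ 0 :=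
    IsOpen.eventually_mem isOpen_compl_singleton hx
  have hupos : (0:ℝ) < ‖x‖ ^ 2 := by
    have := norm_pos_iff.2 hx
    positivity
  have hpd2 : ∀ i : Fin 3,
      pd i (fun y => pd i (fun z => stokesPot ν z t) y) x
        = g1 c (‖x‖ ^ 2) * 2 + 2 * x i * (g2 c (‖x‖ ^ 2) * (2 * x i)) := by
    intro i
    have heq : (fun y => pd i (fun z => stokesPot ν z t) y)
        =ᶠ[nhds x] (fun y : E3 => g1 c (‖y‖ ^ 2) * (2 * y i)) :=
      hxne.mono fun y hy => hpd1 i y hy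
    rw [pd, heq.fderiv_eq]
    have p1 : HasFDerivAt (fun y : E3 => g1 c (‖y‖ ^ 2))
        (g2 c (‖x‖ ^ 2) • (2 • (innerSL ℝ x))) x := by
      have := (hasDerivAt_g1 c hc hupos).comp_hasFDerivAt x (normsq_hasFDerivAt x); exact this
    have p2 : HasFDerivAt (fun y : E3 => 2 * y i)
        ((2:ℝ) • (EuclideanSpace.proj i : E3 →L[ℝ] ℝ)) x :=
      ((EuclideanSpace.proj i : E3 →L[ℝ] ℝ).hasFDerivAt).const_mul (2:ℝ)
    have hprod : HasFDerivAt (fun y : E3 => g1 c (‖y‖ ^ 2) * (2 * y i)) _ x := p1.mul p2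
    rw [hprod.fderiv]
    have hproj : (EuclideanSpace.proj i : E3 →L[ℝ] ℝ) (e3 i) = 1 := by
      simp [e3, EuclideanSpace.single_apply]
    simp only [ContinuousLinearMap.add_apply, ContinuousLinearMap.smul_apply,
      smul_eq_mul, nsmul_eq_mul, inner_e3, hproj]
    push_cast
    ring
  have hsum : ∑ i : Fin 3, (x i) ^ 2 = ‖x‖ ^ 2 := by
    rw [EuclideanSpace.norm_eq, Real.sq_sqrt (by positivity)]
    simp [Real.norm_eq_abs, sq_abs]
  calc ∑ i : Fin 3, pd i (fun y => pd i (fun z => stokesPot ν z t) y) x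
      = ∑ i : Fin 3, (4 * g2 c (‖x‖ ^ 2) * (x i) ^ 2 + 2 * g1 c (‖x‖ ^ 2)) := by
        refine Finset.sum_congr rfl fun i _ => ?_
        rw [hpd2 i]; ring
    _ = 4 * g2 c (‖x‖ ^ 2) * (∑ i : Fin 3, (x i) ^ 2) + 3 * (2 * g1 c (‖x‖ ^ 2)) := by
        rw [Finset.sum_add_distrib, ← Finset.mul_sum, Finset.sum_const, Finset.card_univ,
          Fintype.card_fin, nsmul_eq_mul]
        norm_num
    _ = 4 * (‖x‖ ^ 2) * g2 c (‖x‖ ^ 2) + 6 * g1 c (‖x‖ ^ 2) := by rw [hsum]; ring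
    _ = -(4 / (Real.sqrt π * c ^ 3)) * Real.exp (-‖x‖ ^ 2 / c ^ 2) :=
        key_identity c hc hupos
    _ = -(4 * π) * heatKernel ν x t := by
        rw [heatKernel]
        have h1 : 4 * π * ν * t = π * c ^ 2 := by rw [hc2]; ring
        rw [h1, ← hc2]
        have hb0 : (0:ℝ) < Real.sqrt π * c := by
          have := Real.sqrt_pos.2 pi_pos
          positivity
        have hb : π * c ^ 2 = (Real.sqrt π * c) ^ 2 := by
          rw [mul_pow, Real.sq_sqrt pi_pos.le]
        have hrpow : (π * c ^ 2) ^ (-(3:ℝ) / 2) = ((Real.sqrt π * c) ^ 3)⁻¹ := by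
          rw [hb, ← Real.rpow_natCast (Real.sqrt π * c) 2, ← Real.rpow_mul hb0.le]
          rw [show ((2:ℕ):ℝ) * (-(3:ℝ)/2) = -((3:ℕ):ℝ) by norm_num]
          rw [Real.rpow_neg hb0.le, Real.rpow_natCast]
        rw [hrpow]
        have hπ : Real.sqrt π > 0 := Real.sqrt_pos.2 pi_pos
        have hππ : Real.sqrt π * Real.sqrt π = π := Real.mul_self_sqrt pi_pos.le
        have h3 : (Real.sqrt π * c) ^ 3 = π * Real.sqrt π * c ^ 3 := by
          rw [mul_pow, pow_succ, sq, hππ]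
        rw [h3]
        field_simp

end
end

section
/- For every real ν > 0, each of the three time-dependent Stokeslet velocity fields is divergence free away from its singular origin: for every k ∈ {1,2,3}, every x ∈ ℝ³ with x ≠ 0 and every t > 0, ∑_{i=1}^{3} ∂u^S_{ki}/∂x_i (x,t) = 0. -/
open Real MeasureTheory

noncomputable section

/-! ### Auxiliary machinery -/

namespace StokesletAux

lemma hasDerivAt_erf (y : ℝ) :
    HasDerivAt erf (2 / Real.sqrt π * Real.exp (-y ^ 2)) y := by
  have hc : Continuous fun s : ℝ => Real.exp (-s ^ 2) := by continuity
  have h := (hc.integral_hasStrictDerivAt 0 y).hasDerivAt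
  exact h.const_mul (2 / Real.sqrt π)

lemma hasFDerivAt_norm3 (x : E3) (hx : x ≠ 0) :
    HasFDerivAt (fun y : E3 => ‖y‖) (‖x‖⁻¹ • innerSL ℝ x) x := by
  have h1 : HasFDerivAt (fun y : E3 => ‖y‖ ^ 2) (2 • innerSL ℝ x) x :=
    (hasStrictFDerivAt_norm_sq x).hasFDerivAt
  have hr : (0:ℝ) < ‖x‖ := norm_pos_iff.2 hx
  have h2 := (Real.hasDerivAt_sqrt (by positivity : (‖x‖:ℝ)^2 ≠ 0)).comp_hasFDerivAt x h1
  have heq : (fun y : E3 => Real.sqrt (‖y‖ ^ 2)) = fun y : E3 => ‖y‖ := by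
    funext y; rw [Real.sqrt_sq (norm_nonneg y)]
  rw [Function.comp_def, heq] at h2
  refine h2.congr_fderiv ?_
  rw [Real.sqrt_sq (norm_nonneg x)]
  ext v
  simp [smul_smul]
  ring

lemma inner_e3 (x : E3) (i : Fin 3) : (innerSL ℝ x) (e3 i) = x i := by
  simp [e3, EuclideanSpace.inner_single_right]

lemma hasFDerivAt_comp_norm {f : ℝ → ℝ} {f' : ℝ} (x : E3) (hx : x ≠ 0)
    (hf : HasDerivAt f f' ‖x‖) :
    HasFDerivAt (fun y : E3 => f ‖y‖) ((f' * ‖x‖⁻¹) • innerSL ℝ x) x := by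
  have h := hf.comp_hasFDerivAt x (hasFDerivAt_norm3 x hx)
  refine h.congr_fderiv ?_
  ext v; simp [smul_smul]

lemma pd_comp_norm {f : ℝ → ℝ} {f' : ℝ} (x : E3) (hx : x ≠ 0)
    (hf : HasDerivAt f f' ‖x‖) (i : Fin 3) :
    pd i (fun y : E3 => f ‖y‖) x = f' * ‖x‖⁻¹ * x i := by
  rw [pd, (hasFDerivAt_comp_norm x hx hf).fderiv]
  rw [ContinuousLinearMap.smul_apply, inner_e3, smul_eq_mul]

lemma hasFDerivAt_coord (j : Fin 3) (x : E3) :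
    HasFDerivAt (fun y : E3 => y j) (EuclideanSpace.proj j : E3 →L[ℝ] ℝ) x :=
  (EuclideanSpace.proj j : E3 →L[ℝ] ℝ).hasFDerivAt

lemma proj_e3 (j i : Fin 3) :
    (EuclideanSpace.proj j : E3 →L[ℝ] ℝ) (e3 i) = if j = i then 1 else 0 := by
  simp [e3, EuclideanSpace.single_apply]

lemma pd_formula1 {f : ℝ → ℝ} {f' : ℝ} (x : E3) (hx : x ≠ 0)
    (hf : HasDerivAt f f' ‖x‖) (j i : Fin 3) :
    pd i (fun y : E3 => f ‖y‖ * y j) x =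
      f' * ‖x‖⁻¹ * x i * x j + f ‖x‖ * (if j = i then 1 else 0) := by
  have hF := hasFDerivAt_comp_norm x hx hf
  have h : HasFDerivAt (fun y : E3 => f ‖y‖ * y j) _ x := hF.mul (hasFDerivAt_coord j x)
  rw [pd, h.fderiv]
  simp only [ContinuousLinearMap.add_apply, ContinuousLinearMap.smul_apply,
    ContinuousLinearMap.coe_smul', Pi.smul_apply, inner_e3, proj_e3, smul_eq_mul]
  ring

lemma pd_formula {f g : ℝ → ℝ} {f' g' : ℝ} (x : E3) (hx : x ≠ 0)
    (hf : HasDerivAt f f' ‖x‖) (hg : HasDerivAt g g' ‖x‖) (k j i : Fin 3) :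
    pd i (fun y : E3 => f ‖y‖ * (y k * y j) + g ‖y‖) x =
      f' * ‖x‖⁻¹ * x i * (x k * x j)
        + f ‖x‖ * ((if k = i then 1 else 0) * x j + x k * (if j = i then 1 else 0))
        + g' * ‖x‖⁻¹ * x i := by
  have hF := hasFDerivAt_comp_norm x hx hf
  have hG := hasFDerivAt_comp_norm x hx hg
  have hkj : HasFDerivAt (fun y : E3 => y k * y j) _ x := (hasFDerivAt_coord k x).mul (hasFDerivAt_coord j x)
  have h : HasFDerivAt (fun y : E3 => f ‖y‖ * (y k * y j) + g ‖y‖) _ x := (hF.mul hkj).add hG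
  rw [pd, h.fderiv]
  simp only [ContinuousLinearMap.add_apply, ContinuousLinearMap.smul_apply,
    ContinuousLinearMap.coe_smul', Pi.smul_apply, inner_e3, proj_e3, smul_eq_mul]
  ring

/-! ### The scalar functions -/

/-- `ψ(r) = S'(r)/r` where `S(r) = erf(r/w)/r`. -/
def psiF (w r : ℝ) : ℝ :=
  (2 / Real.sqrt π) * Real.exp (-(r/w)^2) / (w * r^2) - erf (r/w) / r^3

def psiF' (w r : ℝ) : ℝ :=
  -2 * (2 / Real.sqrt π) * Real.exp (-(r/w)^2) / (w^3 * r)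
    - 3 * (2 / Real.sqrt π) * Real.exp (-(r/w)^2) / (w * r^3) + 3 * erf (r/w) / r^4

def psiF'' (w r : ℝ) : ℝ :=
  4 * (2 / Real.sqrt π) * Real.exp (-(r/w)^2) / w^5
    + 8 * (2 / Real.sqrt π) * Real.exp (-(r/w)^2) / (w^3 * r^2)
    + 12 * (2 / Real.sqrt π) * Real.exp (-(r/w)^2) / (w * r^4)
    - 12 * erf (r/w) / r^5

/-- `τ(r) = ∂S/∂t` expressed through `w = √(4νt)`. -/
def tauF (w t r : ℝ) : ℝ := -((2 / Real.sqrt π) / (2 * t * w)) * Real.exp (-(r/w)^2)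

def tauF' (w t r : ℝ) : ℝ := ((2 / Real.sqrt π) * r / (t * w^3)) * Real.exp (-(r/w)^2)

variable {w r t : ℝ}

lemma hasDerivAt_X (hw : w ≠ 0) (r : ℝ) :
    HasDerivAt (fun r : ℝ => Real.exp (-(r/w)^2))
      (-(2*r/w^2) * Real.exp (-(r/w)^2)) r := by
  have h : HasDerivAt (fun r : ℝ => Real.exp (-(r/w)^2)) _ r := ((((hasDerivAt_id r).div_const w).pow 2).neg).exp
  convert h using 1
  simp only [Pi.neg_apply, Pi.pow_apply, id, Nat.cast_ofNat]
  field_simp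
  ring_nf
  field_simp

lemma hasDerivAt_E (hw : w ≠ 0) (r : ℝ) :
    HasDerivAt (fun r : ℝ => erf (r/w))
      ((2 / Real.sqrt π) * Real.exp (-(r/w)^2) / w) r := by
  have h := (hasDerivAt_erf (r/w)).comp r ((hasDerivAt_id r).div_const w)
  refine h.congr_deriv ?_
  field_simp

lemma hasDerivAt_psiF (hw : w ≠ 0) (hr : r ≠ 0) :
    HasDerivAt (psiF w) (psiF' w r) r := by
  have h1 := ((hasDerivAt_X hw r).const_mul (2 / Real.sqrt π)).div
    ((hasDerivAt_pow 2 r).const_mul w) (mul_ne_zero hw (pow_ne_zero 2 hr))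
  have h2 := (hasDerivAt_E hw r).div (hasDerivAt_pow 3 r) (pow_ne_zero 3 hr)
  have h := h1.sub h2
  refine h.congr_deriv ?_
  unfold psiF'
  field_simp
  ring

lemma hasDerivAt_psiF' (hw : w ≠ 0) (hr : r ≠ 0) :
    HasDerivAt (psiF' w) (psiF'' w r) r := by
  have h1 := ((hasDerivAt_X hw r).const_mul (-2 * (2 / Real.sqrt π))).div
    ((hasDerivAt_id r).const_mul (w^3)) (mul_ne_zero (pow_ne_zero 3 hw) hr)
  have h2 := ((hasDerivAt_X hw r).const_mul (3 * (2 / Real.sqrt π))).div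
    ((hasDerivAt_pow 3 r).const_mul w) (mul_ne_zero hw (pow_ne_zero 3 hr))
  have h3 := ((hasDerivAt_E hw r).const_mul 3).div (hasDerivAt_pow 4 r) (pow_ne_zero 4 hr)
  have h := (h1.sub h2).add h3
  refine h.congr_deriv ?_
  unfold psiF''
  simp only [id]
  field_simp
  ring

lemma hasDerivAt_tauF (hw : w ≠ 0) (ht : t ≠ 0) (r : ℝ) :
    HasDerivAt (tauF w t) (tauF' w t r) r := by
  have h := (hasDerivAt_X hw r).const_mul (-((2 / Real.sqrt π) / (2 * t * w)))
  refine h.congr_deriv ?_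
  unfold tauF'
  field_simp

end StokesletAux

open StokesletAux

/-! ### Derivatives of the Stokeslet potential -/

section Potential

variable {ν t : ℝ}

/-- Spatial first derivative of the potential. -/
lemma pd_stokesPot (hν : 0 < ν) (ht : 0 < t) (i : Fin 3) {y : E3} (hy : y ≠ 0) :
    pd i (fun z => stokesPot ν z t) y = psiF (Real.sqrt (4*ν*t)) ‖y‖ * y i := by
  set w := Real.sqrt (4*ν*t) with hwdef
  have hw : w ≠ 0 := ne_of_gt (Real.sqrt_pos.2 (by positivity))
  have hr : ‖y‖ ≠ 0 := norm_ne_zero_iff.2 hy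
  have hf : HasDerivAt (fun ρ : ℝ => erf (ρ / w) / ρ)
      (((2 / Real.sqrt π) * Real.exp (-(‖y‖/w)^2) / w * ‖y‖ - erf (‖y‖/w) * 1) / ‖y‖^2) ‖y‖ :=
    (hasDerivAt_E hw ‖y‖).div (hasDerivAt_id ‖y‖) hr
  have h := pd_comp_norm (f := fun ρ : ℝ => erf (ρ / w) / ρ) y hy hf i
  have heq : (fun z : E3 => stokesPot ν z t) = fun z : E3 => erf (‖z‖ / w) / ‖z‖ := rfl
  rw [heq, h]
  unfold psiF
  field_simp

/-- Spatial second derivative of the potential. -/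
lemma pd_pd_stokesPot (hν : 0 < ν) (ht : 0 < t) (k i : Fin 3) {y : E3} (hy : y ≠ 0) :
    pd k (fun z => pd i (fun z' => stokesPot ν z' t) z) y =
      psiF' (Real.sqrt (4*ν*t)) ‖y‖ * ‖y‖⁻¹ * y k * y i
        + psiF (Real.sqrt (4*ν*t)) ‖y‖ * (if i = k then 1 else 0) := by
  set w := Real.sqrt (4*ν*t) with hwdef
  have hw : w ≠ 0 := ne_of_gt (Real.sqrt_pos.2 (by positivity))
  have hr : ‖y‖ ≠ 0 := norm_ne_zero_iff.2 hy
  have hEv : (fun z : E3 => pd i (fun z' => stokesPot ν z' t) z)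
      =ᶠ[nhds y] fun z : E3 => psiF w ‖z‖ * z i := by
    filter_upwards [eventually_ne_nhds hy] with z hz
    exact pd_stokesPot hν ht i hz
  have h2 := pd_formula1 y hy (hasDerivAt_psiF hw hr) i k
  show (fderiv ℝ (fun z : E3 => pd i (fun z' => stokesPot ν z' t) z) y) (e3 k) = _
  rw [hEv.fderiv_eq]
  unfold pd at h2
  rw [h2]

/-- Time derivative of the potential. -/
lemma deriv_stokesPot (hν : 0 < ν) (ht : 0 < t) {y : E3} (hy : y ≠ 0) :
    deriv (fun s => stokesPot ν y s) t = tauF (Real.sqrt (4*ν*t)) t ‖y‖ := by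
  set w := Real.sqrt (4*ν*t) with hwdef
  have h4 : (0:ℝ) < 4*ν*t := by positivity
  have hw0 : 0 < w := Real.sqrt_pos.2 h4
  have hw : w ≠ 0 := ne_of_gt hw0
  have hw2 : w^2 = 4*ν*t := Real.sq_sqrt h4.le
  have hr : ‖y‖ ≠ 0 := norm_ne_zero_iff.2 hy
  have h1 : HasDerivAt (fun s : ℝ => 4*ν*s) (4*ν) t := by
    simpa using (hasDerivAt_id t).const_mul (4*ν)
  have h2 : HasDerivAt (fun s : ℝ => Real.sqrt (4*ν*s)) (1 / (2 * w) * (4*ν)) t :=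
    (Real.hasDerivAt_sqrt (ne_of_gt h4)).comp t h1
  have h3 : HasDerivAt (fun s : ℝ => ‖y‖ / Real.sqrt (4*ν*s))
      ((0 * w - ‖y‖ * (1 / (2 * w) * (4*ν))) / w^2) t :=
    (hasDerivAt_const t ‖y‖).div h2 hw
  have h5 : HasDerivAt (fun s : ℝ => erf (‖y‖ / Real.sqrt (4*ν*s)) / ‖y‖)
      (2 / Real.sqrt π * Real.exp (-(‖y‖ / w) ^ 2) *
        ((0 * w - ‖y‖ * (1 / (2 * w) * (4*ν))) / w ^ 2) / ‖y‖) t :=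
    ((hasDerivAt_erf (‖y‖ / w)).comp (h₂ := erf) t h3).div_const ‖y‖
  have h6 : (fun s => stokesPot ν y s) = fun s => erf (‖y‖ / Real.sqrt (4*ν*s)) / ‖y‖ := rfl
  rw [h6, h5.deriv]
  have ht' : t = w^2 / (4*ν) := by rw [hw2]; field_simp
  unfold tauF
  rw [ht']
  have hπ : Real.sqrt π ≠ 0 := ne_of_gt (Real.sqrt_pos.2 Real.pi_pos)
  field_simp
  ring

end Potential

/-- Each time-dependent Stokeslet velocity field is divergence free away from the origin:
`∑ᵢ ∂u^S_{ki}/∂xᵢ = 0` for `x ≠ 0`, `t > 0`. -/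
theorem stokeslet_divergence_free (ν : ℝ) (hν : 0 < ν) (k : Fin 3) (x : E3) (hx : x ≠ 0)
    (t : ℝ) (ht : 0 < t) :
    ∑ i : Fin 3, pd i (fun y => stokeslet ν k i y t) x = 0 := by
  set w := Real.sqrt (4*ν*t) with hwdef
  have h4 : (0:ℝ) < 4*ν*t := by positivity
  have hw0 : 0 < w := Real.sqrt_pos.2 h4
  have hw : w ≠ 0 := ne_of_gt hw0
  have hw2 : w^2 = 4*ν*t := Real.sq_sqrt h4.le
  have hr : ‖x‖ ≠ 0 := norm_ne_zero_iff.2 hx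
  set r := ‖x‖ with hrdef
  -- the explicit formula for the stokeslet, valid for `y ≠ 0`
  have hstk : ∀ i : Fin 3, ∀ y : E3, y ≠ 0 → stokeslet ν k i y t =
      (-(1 / (4 * π)) * (psiF' w ‖y‖ / ‖y‖)) * (y k * y i)
        + ((if k = i then 1 else 0) *
            ((1 / (4 * π * ν)) * tauF w t ‖y‖ - (1 / (4 * π)) * psiF w ‖y‖)) := by
    intro i y hy
    unfold stokeslet
    rw [deriv_stokesPot hν ht hy, pd_pd_stokesPot hν ht k i hy, ← hwdef]
    have hry : ‖y‖ ≠ 0 := norm_ne_zero_iff.2 hy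
    have hik : (if i = k then (1:ℝ) else 0) = (if k = i then 1 else 0) := by
      by_cases h : i = k
      · subst h; simp
      · rw [if_neg h, if_neg (fun hki => h hki.symm)]
    rw [hik]
    ring
  -- compute each partial derivative
  have hπ : π ≠ 0 := ne_of_gt Real.pi_pos
  have hν' : ν ≠ 0 := ne_of_gt hν
  have hpd : ∀ i : Fin 3, pd i (fun y => stokeslet ν k i y t) x =
      (-(ν * (psiF'' w r * r - psiF' w r)) * x i * (x k * x i)
        - ν * psiF' w r * r^2 * ((if k = i then 1 else 0) * x i + x k)
        + (if k = i then 1 else 0) * (tauF' w t r - ν * psiF' w r) * x i * r^2)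
        / (4 * π * ν * r^3) := by
    intro i
    have hEv : (fun y : E3 => stokeslet ν k i y t)
        =ᶠ[nhds x] fun y : E3 =>
          (fun ρ : ℝ => -(1 / (4 * π)) * (psiF' w ρ / ρ)) ‖y‖ * (y k * y i)
            + (fun ρ : ℝ => (if k = i then (1:ℝ) else 0) *
                ((1 / (4 * π * ν)) * tauF w t ρ - (1 / (4 * π)) * psiF w ρ)) ‖y‖ := by
      filter_upwards [eventually_ne_nhds hx] with y hy
      simpa using hstk i y hy
    have hf : HasDerivAt (fun ρ : ℝ => -(1 / (4 * π)) * (psiF' w ρ / ρ))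
        (-(1 / (4 * π)) * ((psiF'' w r * r - psiF' w r * 1) / r^2)) r :=
      (((hasDerivAt_psiF' hw hr).div (hasDerivAt_id r) hr).const_mul (-(1 / (4 * π))))
    have hg : HasDerivAt (fun ρ : ℝ => (if k = i then (1:ℝ) else 0) *
          ((1 / (4 * π * ν)) * tauF w t ρ - (1 / (4 * π)) * psiF w ρ))
        ((if k = i then (1:ℝ) else 0) *
          ((1 / (4 * π * ν)) * tauF' w t r - (1 / (4 * π)) * psiF' w r)) r :=
      ((((hasDerivAt_tauF hw (ne_of_gt ht) r).const_mul (1 / (4 * π * ν))).sub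
        ((hasDerivAt_psiF hw hr).const_mul (1 / (4 * π)))).const_mul _)
    have h2 := pd_formula x hx hf hg k i i
    show (fderiv ℝ (fun y : E3 => stokeslet ν k i y t) x) (e3 i) = _
    rw [hEv.fderiv_eq]
    unfold pd at h2
    rw [h2, if_pos rfl]
    by_cases hki : k = i
    · simp only [if_pos hki]
      field_simp
      ring
    · simp only [if_neg hki]
      field_simp
      ring
  rw [Fin.sum_univ_three, hpd 0, hpd 1, hpd 2, ← add_div, ← add_div,
    div_eq_zero_iff]
  refine Or.inl ?_
  -- scalar identity
  have hsum : x 0 ^ 2 + x 1 ^ 2 + x 2 ^ 2 = r ^ 2 := by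
    rw [hrdef, EuclideanSpace.norm_sq_eq, Fin.sum_univ_three]
    simp [Real.norm_eq_abs, sq_abs]
  have hcoef : ν * psiF'' w r * r + 4 * ν * psiF' w r - tauF' w t r = 0 := by
    have ht' : t = w^2 / (4*ν) := by rw [hw2]; field_simp
    unfold psiF' psiF'' tauF'
    rw [ht']
    have hπ2 : Real.sqrt π ≠ 0 := ne_of_gt (Real.sqrt_pos.2 Real.pi_pos)
    field_simp
    ring
  fin_cases k <;>
    simp only [Fin.zero_eta, Fin.mk_one, Fin.reduceFinMk, Fin.isValue]
  · norm_num [Fin.ext_iff]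
    linear_combination (-(ν * (psiF'' w r * r - psiF' w r)) * x 0) * hsum
      + (-(x 0) * r^2) * hcoef
  · norm_num [Fin.ext_iff]
    linear_combination (-(ν * (psiF'' w r * r - psiF' w r)) * x 1) * hsum
      + (-(x 1) * r^2) * hcoef
  · norm_num [Fin.ext_iff]
    linear_combination (-(ν * (psiF'' w r * r - psiF' w r)) * x 2) * hsum
      + (-(x 2) * r^2) * hcoef

end
end

section
/- For every R > 0 and all indices i,k ∈ {1,2,3}, the viscous flux of the Eulerlet through the sphere of radius R vanishes: ∫_{S_R} ∑_{j=1}^{3} ∂³(1/‖x‖)/∂x_k∂x_i∂x_j · (x_j/‖x‖) dσ_R(x) = 0. Explicitly, the integrand equals (−3‖x‖²δ_{ki} + 9x_i x_k)/‖x‖⁶ on S_R, and its integral over the sphere is zero. -/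
open Real MeasureTheory

noncomputable section

/-- Change of variables by a linear isometry on integrals over spheres w.r.t. Hausdorff
measure, together with the corresponding integrability transfer. -/
lemma sphere_comp_linearIsometryEquiv (R : ℝ) (e : E3 ≃ₗᵢ[ℝ] E3) (g : E3 → ℝ) :
    (∫ x in Metric.sphere (0 : E3) R, g (e x) ∂μH[2]
        = ∫ x in Metric.sphere (0 : E3) R, g x ∂μH[2])
    ∧ (Integrable (fun x => g (e x)) (μH[2].restrict (Metric.sphere (0 : E3) R)) ↔
        Integrable g (μH[2].restrict (Metric.sphere (0 : E3) R))) := by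
  set S := Metric.sphere (0 : E3) R with hSdef
  have hS : MeasurableSet S := Metric.isClosed_sphere.measurableSet
  let E : E3 ≃ᵐ E3 := e.toHomeomorph.toMeasurableEquiv
  have hEe : (E : E3 → E3) = e := rfl
  have hmap : Measure.map (⇑E) (μH[2] : Measure E3) = μH[2] := by
    rw [hEe, ← e.coe_toIsometryEquiv]
    exact e.toIsometryEquiv.map_hausdorffMeasure 2
  have hpre : (⇑E) ⁻¹' S = S := by
    ext x
    simp only [Set.mem_preimage, hSdef, mem_sphere_zero_iff_norm, hEe]
    rw [e.norm_map]
  have key : Measure.map (⇑E) (μH[2].restrict S) = μH[2].restrict S := by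
    conv_lhs => rw [← hpre]
    rw [← Measure.restrict_map E.measurable hS, hmap]
  constructor
  · conv_rhs => rw [← key]
    rw [MeasureTheory.integral_map_equiv E g]
    rfl
  · constructor
    · intro h
      rw [← key, integrable_map_equiv E g]
      exact h
    · intro h
      rw [← key, integrable_map_equiv E g] at h
      exact h

/-- The isometry of `ℝ³` negating the `i`-th coordinate. -/
def negCoord (i : Fin 3) : E3 ≃ₗᵢ[ℝ] E3 :=
  LinearIsometryEquiv.piLpCongrRight 2
    (fun j => if j = i then LinearIsometryEquiv.neg ℝ else LinearIsometryEquiv.refl ℝ ℝ)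

lemma negCoord_apply (i : Fin 3) (x : E3) (j : Fin 3) :
    negCoord i x j = if j = i then -x j else x j := by
  simp only [negCoord, LinearIsometryEquiv.piLpCongrRight_apply]
  by_cases h : j = i
  · subst h; simp
  · simp [h]

/-- The isometry of `ℝ³` swapping the coordinates `i` and `j`. -/
def swapCoord (i j : Fin 3) : E3 ≃ₗᵢ[ℝ] E3 :=
  LinearIsometryEquiv.piLpCongrLeft 2 ℝ ℝ (Equiv.swap i j)

lemma swapCoord_apply (i j : Fin 3) (x : E3) (l : Fin 3) :
    swapCoord i j x l = x (Equiv.swap i j l) := by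
  simp only [swapCoord, LinearIsometryEquiv.piLpCongrLeft_apply]
  rw [Equiv.piCongrLeft'_apply, Equiv.symm_swap]

/-- The viscous flux of the Eulerlet through the sphere of radius `R` vanishes:
the integrand `∑ⱼ ∂³(1/‖x‖)/∂x_k∂xᵢ∂xⱼ · xⱼ/‖x‖` equals
`(−3‖x‖²δ_{ki} + 9xᵢx_k)/‖x‖⁶` on `S_R`, and its integral over the sphere is zero. -/
theorem eulerlet_viscous_flux_vanishes (R : ℝ) (hR : 0 < R) (i k : Fin 3) :
    ∫ x in Metric.sphere (0 : E3) R,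
        (-3 * ‖x‖ ^ 2 * (if k = i then 1 else 0) + 9 * x i * x k) / ‖x‖ ^ 6 ∂μH[2] = 0 := by
  by_cases hki : k = i
  · -- diagonal case
    subst hki
    set F : Fin 3 → E3 → ℝ :=
      fun j x => (-3 * ‖x‖ ^ 2 * 1 + 9 * x j * x j) / ‖x‖ ^ 6 with hF
    have hgoal : (fun x : E3 =>
        (-3 * ‖x‖ ^ 2 * (if k = k then 1 else 0) + 9 * x k * x k) / ‖x‖ ^ 6) = F k := by
      funext x; simp [hF]
    rw [show (∫ x in Metric.sphere (0 : E3) R,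
        (-3 * ‖x‖ ^ 2 * (if k = k then 1 else 0) + 9 * x k * x k) / ‖x‖ ^ 6 ∂μH[2])
        = ∫ x in Metric.sphere (0 : E3) R, F k x ∂μH[2] from by rw [hgoal]]
    -- sum of the three diagonal integrands vanishes identically
    have hnormsq : ∀ x : E3, ‖x‖ ^ 2 = x 0 * x 0 + x 1 * x 1 + x 2 * x 2 := by
      intro x
      rw [EuclideanSpace.norm_eq, Real.sq_sqrt (by positivity)]
      simp [Fin.sum_univ_three, pow_two]
    have hsum : ∀ x : E3, F 0 x + F 1 x + F 2 x = 0 := by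
      intro x
      simp only [hF]
      rw [← add_div, ← add_div]
      have : -3 * ‖x‖ ^ 2 * 1 + 9 * x 0 * x 0 + (-3 * ‖x‖ ^ 2 * 1 + 9 * x 1 * x 1)
          + (-3 * ‖x‖ ^ 2 * 1 + 9 * x 2 * x 2) = 0 := by
        rw [hnormsq x]; ring
      rw [this, zero_div]
    -- swap symmetry
    have hswap : ∀ j j' : Fin 3,
        (∫ x in Metric.sphere (0 : E3) R, F j x ∂μH[2]
          = ∫ x in Metric.sphere (0 : E3) R, F j' x ∂μH[2])
        ∧ (Integrable (F j) (μH[2].restrict (Metric.sphere (0 : E3) R)) ↔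
            Integrable (F j') (μH[2].restrict (Metric.sphere (0 : E3) R))) := by
      intro j j'
      have hcomp : (fun x : E3 => F j (swapCoord j j' x)) = F j' := by
        funext x
        simp only [hF, (swapCoord j j').norm_map, swapCoord_apply]
        rw [Equiv.swap_apply_left]
      have h := sphere_comp_linearIsometryEquiv R (swapCoord j j') (F j)
      rw [hcomp] at h
      exact ⟨h.1.symm, h.2.symm⟩
    by_cases hInt : Integrable (F k) (μH[2].restrict (Metric.sphere (0 : E3) R))
    · have hIj : ∀ j : Fin 3,
          Integrable (F j) (μH[2].restrict (Metric.sphere (0 : E3) R)) :=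
        fun j => ((hswap k j).2).mp hInt
      have hzero : ∫ x in Metric.sphere (0 : E3) R, (F 0 x + F 1 x + F 2 x) ∂μH[2] = 0 := by
        simp only [hsum]
        simp
      have e1 : ∫ x in Metric.sphere (0 : E3) R, (F 0 x + F 1 x + F 2 x) ∂μH[2]
          = (∫ x in Metric.sphere (0 : E3) R, (F 0 x + F 1 x) ∂μH[2])
            + ∫ x in Metric.sphere (0 : E3) R, F 2 x ∂μH[2] :=
        integral_add ((hIj 0).add (hIj 1)) (hIj 2)
      have e2 : ∫ x in Metric.sphere (0 : E3) R, (F 0 x + F 1 x) ∂μH[2]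
          = (∫ x in Metric.sphere (0 : E3) R, F 0 x ∂μH[2])
            + ∫ x in Metric.sphere (0 : E3) R, F 1 x ∂μH[2] :=
        integral_add (hIj 0) (hIj 1)
      rw [e1, e2] at hzero
      have h0 := (hswap 0 k).1
      have h1 := (hswap 1 k).1
      have h2 := (hswap 2 k).1
      rw [h0, h1, h2] at hzero
      linarith
    · exact integral_undef hInt
  · -- off-diagonal case
    set G : E3 → ℝ :=
      fun x => (-3 * ‖x‖ ^ 2 * (if k = i then 1 else 0) + 9 * x i * x k) / ‖x‖ ^ 6 with hG
    have hcomp : (fun x : E3 => G (negCoord i x)) = fun x => -G x := by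
      funext x
      simp only [hG, (negCoord i).norm_map, negCoord_apply, if_neg hki, if_pos rfl,
        if_neg (fun h : k = i => hki h), if_true]
      ring
    have h := sphere_comp_linearIsometryEquiv R (negCoord i) G
    rw [hcomp] at h
    have h1 := h.1
    rw [integral_neg] at h1
    linarith
end
end

section
/- For every R > 0 and all indices i,k ∈ {1,2,3}, the quadratic (Bernoulli) flux of the Eulerlet velocity potential through the sphere of radius R vanishes: writing φ(x) = ∂(1/‖x‖)/∂x_k for x ≠ 0, one has ∫_{S_R} [ ∑_{j=1}^{3} ∂φ/∂x_j · ∂φ/∂x_i · (x_j/‖x‖) − (1/2)·( ∑_{j=1}^{3} (∂φ/∂x_j)² )·(x_i/‖x‖) ] dσ_R(x) = 0, by the symmetry of the sphere under x ↦ −x. -/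
open Real MeasureTheory

noncomputable section

lemma pd_even_odd (f : E3 → ℝ) (hf : ∀ y, f (-y) = f y) (k : Fin 3) (x : E3) :
    pd k f (-x) = - pd k f x := by
  have hcomp : f ∘ (ContinuousLinearEquiv.neg ℝ : E3 ≃L[ℝ] E3) = f := by
    funext y; simp [hf y]
  have h := (ContinuousLinearEquiv.neg ℝ (M := E3)).comp_right_fderiv (f := f) (x := x)
  rw [hcomp] at h
  have := congrArg (fun L => L (e3 k)) h
  simp only [ContinuousLinearMap.comp_apply, ContinuousLinearEquiv.coe_coe,
    ContinuousLinearEquiv.neg_apply, map_neg] at this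
  simp only [pd, this]
  ring

lemma pd_odd_even (h : E3 → ℝ) (hh : ∀ y, h (-y) = - h y) (j : Fin 3) (x : E3) :
    pd j h (-x) = pd j h x := by
  have hcomp : h ∘ (ContinuousLinearEquiv.neg ℝ : E3 ≃L[ℝ] E3) = fun y => - h y := by
    funext y; simp [hh y]
  have hc := (ContinuousLinearEquiv.neg ℝ (M := E3)).comp_right_fderiv (f := h) (x := x)
  rw [hcomp, fderiv_fun_neg] at hc
  have := congrArg (fun L => L (e3 j)) hc
  simp only [ContinuousLinearMap.comp_apply, ContinuousLinearMap.neg_apply,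
    ContinuousLinearEquiv.coe_coe, ContinuousLinearEquiv.neg_apply, map_neg] at this
  simp only [pd]
  linarith [this]

/-- The quadratic (Bernoulli) flux of the Eulerlet velocity potential through the sphere of
radius `R` vanishes: with `φ(x) = ∂(1/‖x‖)/∂x_k`,
`∫_{S_R} [∑ⱼ ∂φ/∂xⱼ ∂φ/∂xᵢ xⱼ/‖x‖ − (1/2)(∑ⱼ (∂φ/∂xⱼ)²) xᵢ/‖x‖] dσ_R = 0`. -/
theorem eulerlet_bernoulli_flux_vanishes (R : ℝ) (hR : 0 < R) (i k : Fin 3) :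
    (∫ x in Metric.sphere (0 : E3) R,
        (∑ j : Fin 3, pd j (pd k (fun z => 1 / ‖z‖)) x * pd i (pd k (fun z => 1 / ‖z‖)) x
            * (x j / ‖x‖))
          - (1 / 2) * (∑ j : Fin 3, (pd j (pd k (fun z => 1 / ‖z‖)) x) ^ 2) * (x i / ‖x‖)
        ∂μH[2]) = 0 := by
  set f : E3 → ℝ := fun z => 1 / ‖z‖ with hf
  have hfeven : ∀ y : E3, f (-y) = f y := by intro y; simp [hf]
  have hodd : ∀ y : E3, pd k f (-y) = - pd k f y := pd_even_odd f hfeven k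
  have heven : ∀ (j : Fin 3) (y : E3), pd j (pd k f) (-y) = pd j (pd k f) y := by
    intro j y; exact pd_odd_even (pd k f) hodd j y
  set g : E3 → ℝ := fun x =>
      (∑ j : Fin 3, pd j (pd k f) x * pd i (pd k f) x * (x j / ‖x‖))
        - (1 / 2) * (∑ j : Fin 3, (pd j (pd k f) x) ^ 2) * (x i / ‖x‖) with hg
  have hgodd : ∀ x : E3, g (-x) = - g x := by
    intro x
    have hcoord : ∀ j : Fin 3, (-x : E3) j = -(x j) := fun j => rfl
    simp only [hg, heven, norm_neg, hcoord]
    have h1 : ∑ j : Fin 3, pd j (pd k f) x * pd i (pd k f) x * (-(x j) / ‖x‖)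
        = -∑ j : Fin 3, pd j (pd k f) x * pd i (pd k f) x * (x j / ‖x‖) := by
      rw [← Finset.sum_neg_distrib]
      exact Finset.sum_congr rfl (fun j _ => by ring)
    rw [h1]
    ring
  -- measure preserving negation
  have hmp : MeasurePreserving (fun x : E3 => -x) μH[2] μH[2] :=
    (IsometryEquiv.neg E3).measurePreserving_hausdorffMeasure 2
  have hemb : MeasurableEmbedding (fun x : E3 => -x) :=
    (Homeomorph.neg E3).measurableEmbedding
  have hpre : (fun x : E3 => -x) ⁻¹' Metric.sphere (0 : E3) R = Metric.sphere (0 : E3) R := by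
    ext y; simp
  have key : ∫ x in Metric.sphere (0 : E3) R, g x ∂μH[2]
      = ∫ x in Metric.sphere (0 : E3) R, g (-x) ∂μH[2] := by
    rw [← hmp.setIntegral_preimage_emb hemb g (Metric.sphere (0 : E3) R), hpre]
  have : ∫ x in Metric.sphere (0 : E3) R, g x ∂μH[2]
      = - ∫ x in Metric.sphere (0 : E3) R, g x ∂μH[2] := by
    conv_lhs => rw [key]
    simp only [hgodd]
    exact integral_neg g
  linarith [this]

end
end
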